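/- arXiv:1711.07412 — 4 statements merged into one kernel-verified Lean document; each statement's English description precedes it below -/
import Mathlib

section
/- Let f : Finset V → ℝ be a monotone increasing and submodular set function with f(∅) ≥ 0. For sets a₁,...,a_k ⊆ V, define δ_i = f(a₁ ∪ ... ∪ a_k) - f(a₁ ∪ ... ∪ a_{i-1} ∪ a_{i+1} ∪ ... ∪ a_k) (the marginal contribution of a_i to the union). Then the sum of marginal contributions is at most the total: ∑_{i=1}^k δ_i ≤ f(a₁ ∪ ... ∪ a_k). -/
/-- Submodularity in marginal form. -/
lemma marginal_mono {V : Type*} [DecidableEq V]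
    (f : Finset V → ℝ)
    (hmono : ∀ X Y : Finset V, X ⊆ Y → f X ≤ f Y)
    (hsub : ∀ X Y : Finset V, f (X ∩ Y) + f (X ∪ Y) ≤ f X + f Y)
    (X Y Z : Finset V) (hXY : X ⊆ Y) :
    f (Y ∪ Z) - f Y ≤ f (X ∪ Z) - f X := by
  have h1 := hsub (X ∪ Z) Y
  have h2 : X ⊆ (X ∪ Z) ∩ Y := Finset.subset_inter Finset.subset_union_left hXY
  have h3 := hmono _ _ h2
  have h4 : (X ∪ Z) ∪ Y = Y ∪ Z := by
    ext x; simp only [Finset.mem_union]; tauto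
  rw [h4] at h1
  linarith

/-- For a monotone increasing, submodular set function `f` with `f ∅ ≥ 0`,
the sum over agents of the marginal contribution of `a i` to the union
is at most `f` of the union. -/
theorem sum_marginal_contributions_le {V : Type*} [DecidableEq V]
    (f : Finset V → ℝ)
    (hmono : ∀ X Y : Finset V, X ⊆ Y → f X ≤ f Y)
    (hsub : ∀ X Y : Finset V, f (X ∩ Y) + f (X ∪ Y) ≤ f X + f Y)
    (hempty : 0 ≤ f ∅)
    (k : ℕ) (a : Fin k → Finset V) :
    ∑ i : Fin k,
        (f (Finset.univ.biUnion a) - f ((Finset.univ.erase i).biUnion a))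
      ≤ f (Finset.univ.biUnion a) := by
  set U := Finset.univ.biUnion a with hU
  -- prefix unions
  set g : ℕ → Finset V := fun n =>
    (Finset.univ.filter (fun j : Fin k => (j : ℕ) < n)).biUnion a with hg
  have hg0 : g 0 = ∅ := by simp [hg]
  have hgk : g k = U := by
    simp only [hg, hU]
    congr 1
    ext j
    simp [j.isLt]
  have key : ∀ i : Fin k,
      f U - f ((Finset.univ.erase i).biUnion a) ≤ f (g (i + 1)) - f (g i) := by
    intro i
    have hsubset : g i ⊆ (Finset.univ.erase i).biUnion a := by
      intro x hx
      simp only [hg, Finset.mem_biUnion, Finset.mem_filter] at hx ⊢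
      obtain ⟨j, ⟨_, hj⟩, hxj⟩ := hx
      refine ⟨j, Finset.mem_erase.mpr ⟨?_, Finset.mem_univ j⟩, hxj⟩
      intro h; subst h; omega
    have h1 : (Finset.univ.erase i).biUnion a ∪ a i = U := by
      ext x
      simp only [hU, Finset.mem_union, Finset.mem_biUnion, Finset.mem_erase, Finset.mem_univ,
        true_and, and_true]
      constructor
      · rintro (⟨j, _, hj⟩ | h) <;> [exact ⟨j, hj⟩; exact ⟨i, h⟩]
      · rintro ⟨j, hj⟩
        by_cases hji : j = i
        · subst hji; exact Or.inr hj
        · exact Or.inl ⟨j, hji, hj⟩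
    have h2 : g i ∪ a i = g (i + 1) := by
      ext x
      simp only [hg, Finset.mem_union, Finset.mem_biUnion, Finset.mem_filter, Finset.mem_univ,
        true_and]
      constructor
      · rintro (⟨j, hj, hxj⟩ | h)
        · exact ⟨j, by omega, hxj⟩
        · exact ⟨i, by omega, h⟩
      · rintro ⟨j, hj, hxj⟩
        by_cases hji : j = i
        · subst hji; exact Or.inr hxj
        · exact Or.inl ⟨j, by omega, hxj⟩
    have := marginal_mono f hmono hsub (g i) ((Finset.univ.erase i).biUnion a) (a i) hsubset
    rw [h1, h2] at this
    exact this
  calc ∑ i : Fin k, (f U - f ((Finset.univ.erase i).biUnion a))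
      ≤ ∑ i : Fin k, (f (g (i + 1)) - f (g i)) := Finset.sum_le_sum fun i _ => key i
    _ = ∑ i ∈ Finset.range k, (f (g (i + 1)) - f (g i)) := by
        rw [Finset.sum_range fun i => f (g (i + 1)) - f (g i)]
    _ = f (g k) - f (g 0) := Finset.sum_range_sub (fun n => f (g n)) k
    _ ≤ f U := by rw [hgk, hg0]; linarith
end

section
/- Let g be a finite directed graph with positive integer edge weights, a_r ⊆ V a fixed rumor seed set, and for X ⊆ V define γ^g(X) = |{u ∈ V : dis(a_r,u) = ∞ ∨ dis(X,u) < dis(a_r,u)}|. Then γ^g is submodular: for all X ⊆ Y ⊆ V and v ∉ Y, γ^g(X ∪ {v}) - γ^g(X) ≥ γ^g(Y ∪ {v}) - γ^g(Y). -/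
open scoped Classical

/-- Cost of the walk from `u` to `v` through the intermediate vertices `p`,
in a directed graph with edge weights `w` (`⊤` meaning no edge). -/
def pathCost {V : Type*} [DecidableEq V] (w : V → V → ℕ∞) : V → List V → V → ℕ∞
  | u, [], v => if u = v then 0 else ⊤
  | u, x :: xs, v => w u x + pathCost w x xs v

/-- Weighted shortest-path distance from `u` to `v` (`⊤` if unreachable). -/
noncomputable def wdist {V : Type*} [DecidableEq V] (w : V → V → ℕ∞) (u v : V) : ℕ∞ :=
  ⨅ p : List V, pathCost w u p v

/-- Weighted shortest-path distance from a set `S` to `u` (`⊤` for `S = ∅`). -/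
noncomputable def sdist {V : Type*} [DecidableEq V] (w : V → V → ℕ∞) (S : Finset V) (u : V) : ℕ∞ :=
  S.inf fun s => wdist w s u

lemma sdist_anti {V : Type*} [DecidableEq V] (w : V → V → ℕ∞) {S T : Finset V} (h : S ⊆ T)
    (u : V) : sdist w T u ≤ sdist w S u :=
  Finset.inf_mono h

lemma sdist_insert {V : Type*} [DecidableEq V] (w : V → V → ℕ∞) (v : V) (S : Finset V) (u : V) :
    sdist w (insert v S) u = min (wdist w v u) (sdist w S u) := by
  simp [sdist, Finset.inf_insert]

/-- the number of non-rumor-activated nodes is submodular in the union of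
positive seed sets. -/
theorem nonRumorActivated_count_submodular {V : Type*} [DecidableEq V] [Fintype V]
    (w : V → V → ℕ∞) (hw : ∀ u v, 1 ≤ w u v)
    (ar : Finset V) (X Y : Finset V) (v : V) (hXY : X ⊆ Y) (hv : v ∉ Y) :
    ((Finset.univ.filter fun u : V =>
        sdist w ar u = ⊤ ∨ sdist w (insert v Y) u < sdist w ar u).card : ℤ) -
      ((Finset.univ.filter fun u : V =>
        sdist w ar u = ⊤ ∨ sdist w Y u < sdist w ar u).card : ℤ) ≤
    ((Finset.univ.filter fun u : V =>
        sdist w ar u = ⊤ ∨ sdist w (insert v X) u < sdist w ar u).card : ℤ) -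
      ((Finset.univ.filter fun u : V =>
        sdist w ar u = ⊤ ∨ sdist w X u < sdist w ar u).card : ℤ) := by
  classical
  set A : Finset V → Finset V := fun S => Finset.univ.filter fun u =>
    sdist w ar u = ⊤ ∨ sdist w S u < sdist w ar u with hA
  have hmono : ∀ S T : Finset V, S ⊆ T → A S ⊆ A T := by
    intro S T hST u hu
    simp only [hA, Finset.mem_filter, Finset.mem_univ, true_and] at hu ⊢
    rcases hu with h | h
    · exact Or.inl h
    · exact Or.inr (lt_of_le_of_lt (sdist_anti w hST u) h)
  have key : A (insert v Y) \ A Y ⊆ A (insert v X) \ A X := by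
    intro u hu
    simp only [Finset.mem_sdiff, hA, Finset.mem_filter, Finset.mem_univ, true_and] at hu ⊢
    obtain ⟨h1, h2⟩ := hu
    push_neg at h2
    obtain ⟨har, hY⟩ := h2
    rcases h1 with h | h
    · exact absurd h har
    · rw [sdist_insert, min_lt_iff] at h
      rcases h with h | h
      · refine ⟨Or.inr ?_, ?_⟩
        · rw [sdist_insert, min_lt_iff]
          exact Or.inl h
        · push_neg
          exact ⟨har, le_trans hY (sdist_anti w hXY u)⟩
      · exact absurd h (not_lt.mpr hY)
  have h1 : A Y ⊆ A (insert v Y) := hmono _ _ (Finset.subset_insert _ _)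
  have h2 : A X ⊆ A (insert v X) := hmono _ _ (Finset.subset_insert _ _)
  have e1 := Finset.card_sdiff_add_card_eq_card h1
  have e2 := Finset.card_sdiff_add_card_eq_card h2
  have hle := Finset.card_le_card key
  have := e1; have := e2
  -- translate goal
  show ((A (insert v Y)).card : ℤ) - (A Y).card ≤ ((A (insert v X)).card : ℤ) - (A X).card
  omega
end

section
/- In the setting of the distance-based diffusion in a realization g: for any node u, if u is rumor-activated (dis(a_r,u) ≤ dis(a_j,u) for all j, dis(a_r,u) < ∞) under the full family (a₁,...,a_k) but not rumor-activated when agent i's seed set a_i is removed, then dis(a_i,u) < dis(a_r,u) ≤ dis(a_j,u) for all j ≠ i. Consequently, the number of nodes saved by agent i (rumor-activated without a_i but not with a_i) is at most the number of nodes strictly closest to a_i among all seed sets including a_r. -/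
open scoped Classical

/-- a node that is rumor-activated when agent `i`'s seed set is removed but
not rumor-activated with it present satisfies `dis(a_i,u) < dis(a_r,u) ≤ dis(a_j,u)` for
all `j ≠ i`; consequently the number of nodes saved by agent `i` is at most the number of
nodes strictly closest to `a_i`. -/
theorem saved_nodes_bounded_by_own_cascade {V : Type*} [DecidableEq V] [Fintype V]
    (w : V → V → ℕ∞) (hw : ∀ u v, 1 ≤ w u v)
    (ar : Finset V) (k : ℕ) (a : Fin k → Finset V) (i : Fin k) :
    (∀ u : V,
      ((sdist w ar u < ⊤ ∧ ∀ j : Fin k, j ≠ i → sdist w ar u ≤ sdist w (a j) u) ∧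
        ¬(sdist w ar u < ⊤ ∧ ∀ j : Fin k, sdist w ar u ≤ sdist w (a j) u)) →
      (sdist w (a i) u < sdist w ar u ∧
        ∀ j : Fin k, j ≠ i → sdist w ar u ≤ sdist w (a j) u)) ∧
    (Finset.univ.filter fun u : V =>
        (sdist w ar u < ⊤ ∧ ∀ j : Fin k, j ≠ i → sdist w ar u ≤ sdist w (a j) u) ∧
        ¬(sdist w ar u < ⊤ ∧ ∀ j : Fin k, sdist w ar u ≤ sdist w (a j) u)).card ≤
    (Finset.univ.filter fun u : V =>
        sdist w (a i) u < sdist w ar u ∧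
        ∀ j : Fin k, j ≠ i → sdist w (a i) u ≤ sdist w (a j) u).card := by

  have key : ∀ u : V,
      ((sdist w ar u < ⊤ ∧ ∀ j : Fin k, j ≠ i → sdist w ar u ≤ sdist w (a j) u) ∧
        ¬(sdist w ar u < ⊤ ∧ ∀ j : Fin k, sdist w ar u ≤ sdist w (a j) u)) →
      (sdist w (a i) u < sdist w ar u ∧
        ∀ j : Fin k, j ≠ i → sdist w ar u ≤ sdist w (a j) u) := by
    intro u ⟨⟨hfin, hj⟩, hnot⟩
    push_neg at hnot
    obtain ⟨j, hjlt⟩ := hnot hfin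
    have hji : j = i := by
      by_contra h
      exact absurd (hj j h) (not_le.mpr hjlt)
    exact ⟨hji ▸ hjlt, hj⟩
  refine ⟨key, Finset.card_le_card ?_⟩
  intro u hu
  simp only [Finset.mem_filter, Finset.mem_univ, true_and] at hu ⊢
  obtain ⟨hlt, hj⟩ := key u hu
  exact ⟨hlt, fun j hne => le_trans hlt.le (hj j hne)⟩
end

section
/- Let f : Finset V → ℝ be monotone and submodular with f(∅) ≥ 0, and let a₁,...,a_k ⊆ V with union A. Define δ_i = f(A) - f(A \ a_i) assuming the a_i are pairwise disjoint (so A \ a_i = ⋃_{j≠i} a_j). If for every i and every alternative set b with |b| ≤ |a_i| we have δ_i ≥ f((A\a_i) ∪ b) - f(A\a_i) (exact best response), and Ω = b₁ ∪ ... ∪ b_k with |b_i| ≤ |a_i|, then f(Ω) ≤ 2·f(A). -/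
/-- Telescoping upper bound: adding many sets at once costs at most the sum of
individual marginal gains, by submodularity. -/
lemma sub_union_bound {V : Type*} [DecidableEq V] {ι : Type*} [DecidableEq ι]
    (f : Finset V → ℝ)
    (hmono : ∀ X Y : Finset V, X ⊆ Y → f X ≤ f Y)
    (hsub : ∀ X Y : Finset V, f (X ∩ Y) + f (X ∪ Y) ≤ f X + f Y)
    (A : Finset V) (g : ι → Finset V) (s : Finset ι) :
    f (A ∪ s.biUnion g) ≤ f A + ∑ i ∈ s, (f (A ∪ g i) - f A) := by
  induction s using Finset.induction_on with
  | empty => simp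
  | @insert j s hj ih =>
    rw [Finset.biUnion_insert, Finset.sum_insert hj]
    have hU : A ∪ (g j ∪ s.biUnion g) = (A ∪ g j) ∪ (A ∪ s.biUnion g) := by
      ext x; simp [or_comm, or_left_comm, or_assoc]
    have hsub' := hsub (A ∪ g j) (A ∪ s.biUnion g)
    have hAsub : A ⊆ (A ∪ g j) ∩ (A ∪ s.biUnion g) := by
      intro x hx; simp [hx]
    have hm := hmono _ _ hAsub
    rw [hU]
    linarith [ih]

/-- For pairwise disjoint sets, the sum of removal losses is at most the total loss. -/
lemma sub_removal_bound {V : Type*} [DecidableEq V] {ι : Type*} [DecidableEq ι]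
    (f : Finset V → ℝ)
    (hsub : ∀ X Y : Finset V, f (X ∩ Y) + f (X ∪ Y) ≤ f X + f Y)
    (A : Finset V) (g : ι → Finset V) (s : Finset ι)
    (hd : ∀ i ∈ s, ∀ j ∈ s, i ≠ j → Disjoint (g i) (g j)) :
    ∑ i ∈ s, (f A - f (A \ g i)) ≤ f A - f (A \ s.biUnion g) := by
  induction s using Finset.induction_on with
  | empty => simp
  | @insert j s hj ih =>
    rw [Finset.biUnion_insert, Finset.sum_insert hj]
    have hd' : ∀ i ∈ s, ∀ j' ∈ s, i ≠ j' → Disjoint (g i) (g j') := by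
      intro i hi j' hj' hne
      exact hd i (Finset.mem_insert_of_mem hi) j' (Finset.mem_insert_of_mem hj') hne
    have ih' := ih hd'
    -- submodularity with X = A \ s.biUnion g, Y = A \ g j
    have hX : (A \ s.biUnion g) ∪ (A \ g j) = A := by
      ext x
      simp only [Finset.mem_union, Finset.mem_sdiff, Finset.mem_biUnion]
      constructor
      · rintro (⟨h, _⟩ | ⟨h, _⟩) <;> exact h
      · intro hx
        by_cases hxj : x ∈ g j
        · left
          refine ⟨hx, ?_⟩
          rintro ⟨i, hi, hxi⟩
          have hne : i ≠ j := by rintro rfl; exact hj hi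
          exact Finset.disjoint_left.mp
            (hd i (Finset.mem_insert_of_mem hi) j (Finset.mem_insert_self j s) hne) hxi hxj
        · right; exact ⟨hx, hxj⟩
    have hI : (A \ s.biUnion g) ∩ (A \ g j) = A \ (g j ∪ s.biUnion g) := by
      ext x
      simp only [Finset.mem_inter, Finset.mem_sdiff, Finset.mem_union]
      tauto
    have hsub' := hsub (A \ s.biUnion g) (A \ g j)
    rw [hX, hI] at hsub'
    linarith

/-- a pure Nash equilibrium of the rumor-aware game (exact best responses,
monotone submodular social utility) achieves at least half of the optimum. -/
theorem pure_nash_half_optimal {V : Type*} [DecidableEq V]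
    (f : Finset V → ℝ)
    (hmono : ∀ X Y : Finset V, X ⊆ Y → f X ≤ f Y)
    (hsub : ∀ X Y : Finset V, f (X ∩ Y) + f (X ∪ Y) ≤ f X + f Y)
    (hempty : 0 ≤ f ∅)
    (k : ℕ) (a b : Fin k → Finset V)
    (hdisj : ∀ i j : Fin k, i ≠ j → Disjoint (a i) (a j))
    (A Ω : Finset V)
    (hA : A = Finset.univ.biUnion a) (hΩ : Ω = Finset.univ.biUnion b)
    (hbudget : ∀ i : Fin k, (b i).card ≤ (a i).card)
    (hbest : ∀ (i : Fin k) (c : Finset V), c.card ≤ (a i).card →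
      f ((A \ a i) ∪ c) - f (A \ a i) ≤ f A - f (A \ a i)) :
    f Ω ≤ 2 * f A := by
  have h1 : f Ω ≤ f (A ∪ Ω) := hmono _ _ Finset.subset_union_right
  have h2 : f (A ∪ Ω) ≤ f A + ∑ i : Fin k, (f (A ∪ b i) - f A) := by
    rw [hΩ]; exact sub_union_bound f hmono hsub A b Finset.univ
  -- per-player bound: f (A ∪ b i) - f A ≤ f A - f (A \ a i)
  have h3 : ∀ i : Fin k, f (A ∪ b i) - f A ≤ f A - f (A \ a i) := by
    intro i
    have hbi := hbest i (b i) (hbudget i)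
    -- submodularity: X = A, Y = (A \ a i) ∪ b i
    have hU : A ∪ ((A \ a i) ∪ b i) = A ∪ b i := by
      ext x
      simp only [Finset.mem_union, Finset.mem_sdiff]
      tauto
    have hIsub : A \ a i ⊆ A ∩ ((A \ a i) ∪ b i) := by
      intro x hx
      simp only [Finset.mem_inter, Finset.mem_union, Finset.mem_sdiff] at *
      tauto
    have hm := hmono _ _ hIsub
    have hsub' := hsub A ((A \ a i) ∪ b i)
    rw [hU] at hsub'
    linarith
  have h4 : ∑ i : Fin k, (f (A ∪ b i) - f A) ≤ ∑ i : Fin k, (f A - f (A \ a i)) :=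
    Finset.sum_le_sum fun i _ => h3 i
  have h5 : ∑ i : Fin k, (f A - f (A \ a i)) ≤ f A - f (A \ Finset.univ.biUnion a) :=
    sub_removal_bound f hsub A a Finset.univ (fun i _ j _ hne => hdisj i j hne)
  have h6 : A \ Finset.univ.biUnion a = ∅ := by rw [← hA]; simp
  rw [h6] at h5
  linarith
end
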